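/- For any Leibniz algebra g over a field k, the universal algebra A(k, g) associated to the 1-dimensional abelian Leibniz algebra k and g is isomorphic as a commutative k-algebra to the symmetric algebra S(g/g') of the quotient of g by its derived subalgebra g' = [g,g]. In particular, if g is perfect (g' = g), then A(k,g) ≅ k. -/

import Mathlib

open TensorProduct MvPolynomial

/-- The universal polynomial `P_{(a,i,j)} = Σ_u β^u_{ij} X_{au} - Σ_{s,t} τ^a_{st} X_{si} X_{tj}`. -/
noncomputable def univPoly {k : Type*} [Field k] {n : ℕ} {I : Type*}
    (τ : Fin n → Fin n → Fin n → k) (β : I → I → I →₀ k)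
    (a : Fin n) (i j : I) : MvPolynomial (Fin n × I) k :=
  (β i j).sum (fun u c => C c * X (a, u)) -
    ∑ s : Fin n, ∑ t : Fin n, C (τ s t a) * X (s, i) * X (t, j)

/-- The ideal generated by the universal polynomials. -/
noncomputable def univIdeal {k : Type*} [Field k] {n : ℕ} {I : Type*}
    (τ : Fin n → Fin n → Fin n → k) (β : I → I → I →₀ k) :
    Ideal (MvPolynomial (Fin n × I) k) :=
  Ideal.span (Set.range fun p : Fin n × I × I => univPoly τ β p.1 p.2.1 p.2.2)

/-- The universal algebra `A(h,g)`. -/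
noncomputable abbrev univAlg {k : Type*} [Field k] {n : ℕ} {I : Type*}
    (τ : Fin n → Fin n → Fin n → k) (β : I → I → I →₀ k) :=
  MvPolynomial (Fin n × I) k ⧸ univIdeal τ β

/-- The generator `x_{si}` of `A(h,g)`. -/
noncomputable def univGen {k : Type*} [Field k] {n : ℕ} {I : Type*}
    (τ : Fin n → Fin n → Fin n → k) (β : I → I → I →₀ k)
    (s : Fin n) (i : I) : univAlg τ β :=
  Ideal.Quotient.mk (univIdeal τ β) (X (s, i))


/-! For the one-dimensional abelian algebra `h = k` the structure constants `τ` vanish, so the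
defining relations of `A(k, g)` are the linear forms `Σ_u β^u_{ij} x_u`: it is the polynomial ring
on a basis of `g`, i.e. `S(g)`, modulo the ideal generated by `g' = span {β_{ij}}`. Dividing a
symmetric algebra `S(M)` by the ideal generated by the image of `span s` gives `S(M / span s)`, so
`A(k, g)` and `S` both satisfy the universal property of `S(g/g')`; for perfect `g` this is
`S(0) = k`. -/

open Set Submodule

theorem Submodule.span_range_apply₂_eq_span_range_basis {R M N P ι κ : Type*} [CommSemiring R]
    [AddCommMonoid M] [Module R M] [AddCommMonoid N] [Module R N] [AddCommMonoid P] [Module R P]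
    (b : Module.Basis ι R M) (c : Module.Basis κ R N) (f : M →ₗ[R] N →ₗ[R] P) :
    span R (range fun p : M × N => f p.1 p.2) =
      span R (range fun p : ι × κ => f (b p.1) (c p.2)) := by
  have hM : span R (range (id : M → M)) = ⊤ := by simp
  have hN : span R (range (id : N → N)) = ⊤ := by simp
  calc span R (range fun p : M × N => f p.1 p.2)
      = map₂ f (span R (range id)) (span R (range id)) := by
        rw [map₂_span_span, image2_range]; rfl
    _ = map₂ f (span R (range b)) (span R (range c)) := by rw [hM, hN, b.span_eq, c.span_eq]
    _ = _ := by rw [map₂_span_span, image2_range]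

section Quotient

variable {R M A : Type*} [CommRing R] [AddCommGroup M] [Module R M] [CommRing A] [Algebra R A]

noncomputable def quotientSpanMap (f : M →ₗ[R] A) (s : Set M) :
    M ⧸ span R s →ₗ[R] A ⧸ Ideal.span (f '' s) :=
  (span R s).liftQ ((Ideal.Quotient.mkₐ R _).toLinearMap ∘ₗ f) <| span_le.2 fun _ hx =>
    Ideal.Quotient.eq_zero_iff_mem.2 (Ideal.subset_span (mem_image_of_mem f hx))

@[simp]
theorem quotientSpanMap_mk (f : M →ₗ[R] A) (s : Set M) (x : M) :
    quotientSpanMap f s (Submodule.Quotient.mk x) = Ideal.Quotient.mk _ (f x) := rfl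

theorem IsSymmetricAlgebra.quotient_span {f : M →ₗ[R] A} (h : IsSymmetricAlgebra f)
    (s : Set M) : IsSymmetricAlgebra (quotientSpanMap f s) := by
  set g := SymmetricAlgebra.ι R (M ⧸ span R s) ∘ₗ (span R s).mkQ
  have hker : Ideal.span (f '' s) ≤ RingHom.ker (h.lift g) := by
    rw [Ideal.span_le]
    rintro _ ⟨x, hx, rfl⟩
    simp [g, (Submodule.Quotient.mk_eq_zero _).2 (subset_span hx)]
  let inv : A ⧸ Ideal.span (f '' s) →ₐ[R] SymmetricAlgebra R (M ⧸ span R s) :=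
    Ideal.Quotient.liftₐ _ (h.lift g) fun a ha => hker ha
  have hinv (x : M) : inv (Ideal.Quotient.mk _ (f x)) = g x := h.lift_eq g x
  refine .of_equiv (.ofAlgHom (SymmetricAlgebra.lift _) inv ?_ ?_)
    (SymmetricAlgebra.lift_comp_ι _)
  · refine Ideal.Quotient.algHom_ext R (h.algHom_ext (LinearMap.ext fun x => ?_))
    simp [hinv, g]
  · refine SymmetricAlgebra.algHom_ext (Submodule.linearMap_qext _ (LinearMap.ext fun x => ?_))
    simp [hinv, g]

end Quotient

theorem IsSymmetricAlgebra.of_forall_existsUnique {R M S : Type u} [CommRing R]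
    [AddCommMonoid M] [Module R M] [CommRing S] [Algebra R S] {ι : M →ₗ[R] S}
    (hS : ∀ (A : Type u) [CommRing A] [Algebra R A] (φ : M →ₗ[R] A),
      ∃! θ : S →ₐ[R] A, θ.toLinearMap ∘ₗ ι = φ) :
    IsSymmetricAlgebra ι := by
  obtain ⟨θ, hθ, -⟩ := hS (SymmetricAlgebra R M) (SymmetricAlgebra.ι R M)
  have hθ' : ∀ x, θ (ι x) = SymmetricAlgebra.ι R M x := LinearMap.congr_fun hθ
  refine .of_equiv (.ofAlgHom (SymmetricAlgebra.lift ι) θ ?_ ?_)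
    (SymmetricAlgebra.lift_comp_ι _)
  · exact (hS S ι).unique (LinearMap.ext fun x => by simp [hθ']) (LinearMap.ext fun _ => rfl)
  · exact SymmetricAlgebra.algHom_ext (LinearMap.ext fun x => by simp [hθ'])

theorem IsSymmetricAlgebra.zero_of_subsingleton {R M : Type*} [CommSemiring R]
    [AddCommMonoid M] [Module R M] [Subsingleton M] : IsSymmetricAlgebra (0 : M →ₗ[R] R) :=
  .of_equiv (.ofAlgHom SymmetricAlgebra.algebraMapInv (Algebra.ofId R _) (Subsingleton.elim _ _)
    (SymmetricAlgebra.algHom_ext (Subsingleton.elim _ _))) (Subsingleton.elim _ _)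

noncomputable def finOneProdBasis (k I : Type*) [Semiring k] :
    Module.Basis (Fin 1 × I) k (I →₀ k) :=
  Finsupp.basisSingleOne.reindex (Equiv.uniqueProd I (Fin 1)).symm

section UniversalAlgebra

variable {k : Type*} [Field k] {I : Type*}

theorem univPoly_zero_eq_constr (β : I → I → I →₀ k) (a : Fin 1) (i j : I) :
    univPoly (fun _ _ _ => (0 : k)) β a i j = (finOneProdBasis k I).constr k X (β i j) := by
  have hconstr : (finOneProdBasis k I).constr k X =
      Finsupp.linearCombination k fun u => (X (a, u) : MvPolynomial (Fin 1 × I) k) :=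
    (finOneProdBasis k I).ext fun ⟨a', u⟩ => by
      rw [Module.Basis.constr_basis, Subsingleton.elim a' a]
      simp [finOneProdBasis]
  simp [univPoly, hconstr, Finsupp.linearCombination_apply, C_mul']

theorem univIdeal_zero_eq_span (β : I → I → I →₀ k) :
    univIdeal (fun _ _ _ => (0 : k) : Fin 1 → Fin 1 → Fin 1 → k) β =
      Ideal.span ((finOneProdBasis k I).constr k X '' range fun p : I × I => β p.1 p.2) := by
  rw [univIdeal, ← range_comp]
  congr 1
  ext
  simp [univPoly_zero_eq_constr]

theorem exists_isSymmetricAlgebra_univAlg (β : I → I → I →₀ k) :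
    ∃ ι : (I →₀ k) ⧸ span k (range fun p : I × I => β p.1 p.2) →ₗ[k]
      univAlg (fun _ _ _ => (0 : k) : Fin 1 → Fin 1 → Fin 1 → k) β,
      IsSymmetricAlgebra ι := by
  unfold univAlg
  rw [univIdeal_zero_eq_span]
  exact ⟨_, (SymmetricAlgebra.IsSymmetricAlgebra.mvPolynomial _ _).quotient_span _⟩

end UniversalAlgebra

theorem stmt_8 (k : Type u) [Field k] (I : Type u) (β : I → I → I →₀ k)
    (bG : (I →₀ k) →ₗ[k] (I →₀ k) →ₗ[k] (I →₀ k))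
    (hbG : ∀ i j : I, bG (Finsupp.single i 1) (Finsupp.single j 1) = β i j)
    (G' : Submodule k (I →₀ k))
    (hG' : G' = Submodule.span k (Set.range fun p : (I →₀ k) × (I →₀ k) => bG p.1 p.2))
    (S : Type u) [CommRing S] [Algebra k S] (ι : ((I →₀ k) ⧸ G') →ₗ[k] S)
    (hS : ∀ (A : Type u) [CommRing A] [Algebra k A] (φ : ((I →₀ k) ⧸ G') →ₗ[k] A),
      ∃! θ : S →ₐ[k] A, θ.toLinearMap ∘ₗ ι = φ) :
    Nonempty (univAlg (fun _ _ _ => (0 : k) : Fin 1 → Fin 1 → Fin 1 → k) β ≃ₐ[k] S) ∧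
      (G' = ⊤ → Nonempty
        (univAlg (fun _ _ _ => (0 : k) : Fin 1 → Fin 1 → Fin 1 → k) β ≃ₐ[k] k)) := by
  have hG : G' = span k (range fun p : I × I => β p.1 p.2) := by
    rw [hG', span_range_apply₂_eq_span_range_basis Finsupp.basisSingleOne Finsupp.basisSingleOne]
    simp [hbG]
  subst hG
  obtain ⟨ιA, hA⟩ := exists_isSymmetricAlgebra_univAlg β
  refine ⟨⟨hA.equiv.symm.trans (IsSymmetricAlgebra.of_forall_existsUnique hS).equiv⟩,
    fun hperfect => ?_⟩
  have := Submodule.Quotient.subsingleton_iff.2 hperfect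
  exact ⟨hA.equiv.symm.trans IsSymmetricAlgebra.zero_of_subsingleton.equiv⟩
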